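/- The information identity for the β-components of the generalized Heckman model holds conditionally on selection: ∫_{-∞}^{∞} { (ρ²/(1 − ρ²)) [ ζ(y) φ(ζ(y))/Φ(ζ(y)) + φ(ζ(y))²/Φ(ζ(y))² ] + 1 } f(y) dy = ∫_{-∞}^{∞} [ z(y) − (ρ/√(1 − ρ²)) φ(ζ(y))/Φ(ζ(y)) ]² f(y) dy, where f(y) = (1/(σ Φ(μ₂))) φ(z(y)) Φ(ζ(y)); that is, minus the conditional expectation of the second derivative of the log-likelihood with respect to β equals the conditional expectation of the squared β-score. -/

import Mathlib

open MeasureTheory Set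

/-- Standard normal density. -/
noncomputable def phi (t : ℝ) : ℝ := Real.exp (-(t ^ 2) / 2) / Real.sqrt (2 * Real.pi)

/-- Standard normal cumulative distribution function. -/
noncomputable def Phi (x : ℝ) : ℝ := ∫ t in Set.Iic x, phi t

/-!
Write `a = ρ / √(1 - ρ²)` and `ζ₀ t = (μ₂ + ρ t) / √(1 - ρ²)`, so that `ζ = ζ₀ ∘ z` and
`ζ₀' = a`. After the substitution `t = z y`, the two integrands differ by the derivative of
`g t = a φ(t) φ(ζ₀ t) - t φ(t) Φ(ζ₀ t)`, and `∫ g' = 0` because `g` and `g'` are integrable: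
every term is `φ(t)`, `t φ(t)` or `t² φ(t)` times a bounded function of `ζ₀ t`. The only
delicate bound is `φ(x)² ≤ e Φ(x)`, which keeps the `invMillsRatio ^ 2` term of the
information integrable.
-/

open Real ProbabilityTheory

lemma phi_eq_gaussianPDFReal : phi = gaussianPDFReal 0 1 := by
  ext t
  simp [phi, gaussianPDFReal, div_eq_inv_mul]

lemma phi_pos (t : ℝ) : 0 < phi t := by
  unfold phi; positivity

lemma continuous_phi : Continuous phi := by
  unfold phi; fun_prop

lemma integrable_phi : Integrable phi :=
  phi_eq_gaussianPDFReal ▸ integrable_gaussianPDFReal 0 1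

lemma integral_phi : ∫ t, phi t = 1 := by
  rw [phi_eq_gaussianPDFReal]
  exact integral_gaussianPDFReal_eq_one 0 one_ne_zero

lemma one_le_sqrt_two_pi : 1 ≤ √(2 * π) :=
  one_le_sqrt.2 (by linarith [pi_gt_three])

lemma phi_le_exp (t : ℝ) : phi t ≤ exp (-(t ^ 2) / 2) :=
  div_le_self (exp_nonneg _) one_le_sqrt_two_pi

lemma abs_phi_le_one (t : ℝ) : |phi t| ≤ 1 := by
  rw [abs_of_pos (phi_pos t)]
  exact (phi_le_exp t).trans (exp_le_one_iff.2 (by nlinarith [sq_nonneg t]))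

lemma abs_mul_phi_le_one (t : ℝ) : |t * phi t| ≤ 1 := by
  have habs : |t| ≤ exp (t ^ 2 / 2) := by
    nlinarith [add_one_le_exp (t ^ 2 / 2), sq_nonneg (|t| - 1), sq_abs t]
  calc |t * phi t| = |t| * phi t := by rw [abs_mul, abs_of_pos (phi_pos t)]
    _ ≤ exp (t ^ 2 / 2) * exp (-(t ^ 2) / 2) :=
      mul_le_mul habs (phi_le_exp t) (phi_pos t).le (exp_nonneg _)
    _ = 1 := by rw [← exp_add]; ring_nf; exact exp_zero

lemma hasDerivAt_phi (t : ℝ) : HasDerivAt phi (-t * phi t) t := by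
  have h : HasDerivAt phi _ t := (((hasDerivAt_pow 2 t).neg.div_const 2).exp).div_const √(2 * π)
  refine h.congr_deriv ?_
  simp only [phi, Pi.neg_apply]; ring_nf

lemma integrable_mul_phi : Integrable fun t => t * phi t := by
  have h := (integrable_mul_exp_neg_mul_sq (b := 1 / 2) (by norm_num)).div_const √(2 * π)
  refine h.congr (ae_of_all _ fun t => ?_)
  simp only [phi]; ring_nf

lemma integrable_sq_mul_phi : Integrable fun t => t ^ 2 * phi t := by
  have h := (integrable_rpow_mul_exp_neg_mul_sq (b := 1 / 2) (s := 2) (by norm_num)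
    (by norm_num)).div_const √(2 * π)
  refine h.congr (ae_of_all _ fun t => ?_)
  simp only [phi, rpow_two]; ring_nf

lemma Phi_pos (x : ℝ) : 0 < Phi x := by
  rw [Phi, setIntegral_pos_iff_support_of_nonneg_ae (ae_of_all _ fun t => (phi_pos t).le)
    integrable_phi.integrableOn, Function.support_eq_univ (fun t => (phi_pos t).ne'),
    univ_inter]
  simp

lemma Phi_le_one (x : ℝ) : Phi x ≤ 1 :=
  integral_phi ▸ setIntegral_le_integral integrable_phi (ae_of_all _ fun t => (phi_pos t).le)

lemma abs_Phi_le_one (x : ℝ) : |Phi x| ≤ 1 := by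
  rw [abs_of_pos (Phi_pos x)]; exact Phi_le_one x

lemma monotone_Phi : Monotone Phi := fun _ _ hab =>
  setIntegral_mono_set integrable_phi.integrableOn (ae_of_all _ fun t => (phi_pos t).le)
    (Iic_subset_Iic.2 hab).eventuallyLE

lemma hasDerivAt_Phi (x : ℝ) : HasDerivAt Phi (phi x) x := by
  have hPhi : Phi = fun u => Phi 0 + ∫ t in (0 : ℝ)..u, phi t := by
    funext u
    rw [← intervalIntegral.integral_Iic_sub_Iic integrable_phi.integrableOn
      integrable_phi.integrableOn, Phi, Phi]
    ring
  rw [hPhi]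
  exact (intervalIntegral.integral_hasDerivAt_right integrable_phi.intervalIntegrable
    (continuous_phi.stronglyMeasurableAtFilter _ _) continuous_phi.continuousAt).const_add _

lemma continuous_Phi : Continuous Phi :=
  continuous_iff_continuousAt.2 fun x => (hasDerivAt_Phi x).continuousAt

lemma phi_sub_one_le_Phi {x : ℝ} (hx : x ≤ 0) : phi (x - 1) ≤ Phi x := by
  have hmin : ∀ t ∈ Ioc (x - 1) x, phi (x - 1) ≤ phi t := fun t ht => by
    unfold phi
    gcongr rexp ?_ / _
    nlinarith [ht.1, ht.2]
  calc phi (x - 1) = phi (x - 1) * volume.real (Ioc (x - 1) x) := by simp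
    _ ≤ ∫ t in Ioc (x - 1) x, phi t :=
      setIntegral_ge_of_const_le_real measurableSet_Ioc (by simp) hmin
        integrable_phi.integrableOn
    _ ≤ Phi x := setIntegral_mono_set integrable_phi.integrableOn
      (ae_of_all _ fun t => (phi_pos t).le) Ioc_subset_Iic_self.eventuallyLE

lemma phi_sq_le_exp_one_mul_Phi (x : ℝ) : phi x ^ 2 ≤ exp 1 * Phi x := by
  set m := min x 0
  have hexp : -x ^ 2 ≤ 1 + -((m - 1) ^ 2) / 2 := by
    rcases le_total x 0 with hx | hx
    · rw [show m = x from min_eq_left hx]; nlinarith [sq_nonneg (x + 1)]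
    · rw [show m = 0 from min_eq_right hx]; nlinarith
  calc phi x ^ 2 = exp (-x ^ 2) / (√(2 * π) * √(2 * π)) := by
        rw [phi, div_pow, ← exp_nat_mul]; ring_nf
    _ ≤ exp (1 + -((m - 1) ^ 2) / 2) / √(2 * π) := by
        gcongr
        exact le_mul_of_one_le_left (by positivity) one_le_sqrt_two_pi
    _ = exp 1 * phi (m - 1) := by rw [exp_add, phi]; ring
    _ ≤ exp 1 * Phi x := by
        gcongr
        exact (phi_sub_one_le_Phi (min_le_right x 0)).trans (monotone_Phi (min_le_left x 0))

lemma continuous_phi_sq_div_Phi : Continuous fun x => phi x ^ 2 / Phi x :=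
  (continuous_phi.pow 2).div continuous_Phi fun x => (Phi_pos x).ne'

lemma abs_phi_sq_div_Phi_le (x : ℝ) : |phi x ^ 2 / Phi x| ≤ exp 1 := by
  rw [abs_of_nonneg (by have := Phi_pos x; positivity), div_le_iff₀ (Phi_pos x)]
  exact phi_sq_le_exp_one_mul_Phi x

noncomputable def invMillsRatio (x : ℝ) : ℝ := phi x / Phi x

theorem integral_info_eq_integral_score_sq {ζ : ℝ → ℝ} {a : ℝ}
    (hζ : ∀ t, HasDerivAt ζ a t) :
    ∫ t, (a ^ 2 * (ζ t * invMillsRatio (ζ t) + invMillsRatio (ζ t) ^ 2) + 1)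
        * (phi t * Phi (ζ t))
      = ∫ t, (t - a * invMillsRatio (ζ t)) ^ 2 * (phi t * Phi (ζ t)) := by
  have hζc : Continuous ζ := continuous_iff_continuousAt.2 fun t => (hζ t).continuousAt
  have hbdd {f h : ℝ → ℝ} {C : ℝ} (hf : Integrable f) (hh : Continuous h)
      (hC : ∀ x, |h x| ≤ C) : Integrable fun t => f t * h (ζ t) :=
    hf.mul_bdd (g := fun t => h (ζ t)) (hh.comp hζc).aestronglyMeasurable
      (ae_of_all _ fun t => hC (ζ t))
  have hΦ := hbdd integrable_phi continuous_Phi abs_Phi_le_one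
  have htΦ := hbdd integrable_mul_phi continuous_Phi abs_Phi_le_one
  have ht2Φ := hbdd integrable_sq_mul_phi continuous_Phi abs_Phi_le_one
  have hφ := hbdd integrable_phi continuous_phi abs_phi_le_one
  have htφ := hbdd integrable_mul_phi continuous_phi abs_phi_le_one
  have hζφ := hbdd integrable_phi (continuous_id.mul continuous_phi) abs_mul_phi_le_one
  have hφ2Φ := hbdd integrable_phi continuous_phi_sq_div_Phi abs_phi_sq_div_Phi_le
  set L : ℝ → ℝ := fun t => a ^ 2 * (phi t * (ζ t * phi (ζ t)))
    + a ^ 2 * (phi t * (phi (ζ t) ^ 2 / Phi (ζ t))) + phi t * Phi (ζ t)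
  set g : ℝ → ℝ := fun t => a * (phi t * phi (ζ t)) - t * phi t * Phi (ζ t)
  set g' : ℝ → ℝ := fun t => t ^ 2 * phi t * Phi (ζ t) - phi t * Phi (ζ t)
    - 2 * a * (t * phi t * phi (ζ t)) - a ^ 2 * (phi t * (ζ t * phi (ζ t)))
  have hL : Integrable L := ((hζφ.const_mul _).add (hφ2Φ.const_mul _)).add hΦ
  have hg : Integrable g := (hφ.const_mul a).sub htΦ
  have hg' : Integrable g' := ((ht2Φ.sub hΦ).sub (htφ.const_mul (2 * a))).sub (hζφ.const_mul _)
  have hderiv (t : ℝ) : HasDerivAt g (g' t) t := by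
    have hφζ := (hasDerivAt_phi (ζ t)).comp t (hζ t)
    have hΦζ := (hasDerivAt_Phi (ζ t)).comp t (hζ t)
    refine ((((hasDerivAt_phi t).mul hφζ).const_mul a).sub
      (((hasDerivAt_id t).mul (hasDerivAt_phi t)).mul hΦζ)).congr_deriv ?_
    simp only [g', id, Function.comp, Pi.mul_apply]
    ring
  calc _ = ∫ t, L t := integral_congr_ae (ae_of_all _ fun t => by
          have := (Phi_pos (ζ t)).ne'
          simp only [L, invMillsRatio]
          field_simp)
    _ = ∫ t, L t + g' t := by
          rw [integral_add hL hg', integral_eq_zero_of_hasDerivAt_of_integrable hderiv hg' hg,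
            add_zero]
    _ = _ := integral_congr_ae (ae_of_all _ fun t => by
          have := (Phi_pos (ζ t)).ne'
          simp only [L, g', invMillsRatio]
          field_simp
          ring)

lemma integral_comp_sub_div {E : Type*} [NormedAddCommGroup E] [NormedSpace ℝ E]
    (F : ℝ → E) (m σ : ℝ) : ∫ y, F ((y - m) / σ) = |σ| • ∫ t, F t := by
  rw [integral_sub_right_eq_self (fun u => F (u / σ)) m, Measure.integral_comp_div]

theorem GH_information_identity_beta (μ₁ μ₂ σ ρ : ℝ) (hσ : 0 < σ) (hρ₁ : -1 < ρ) (hρ₂ : ρ < 1)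
    (z ζ : ℝ → ℝ)
    (hz : ∀ y, z y = (y - μ₁) / σ)
    (hζ : ∀ y, ζ y = (μ₂ + ρ * z y) / Real.sqrt (1 - ρ ^ 2)) :
    (∫ y : ℝ, ((ρ ^ 2 / (1 - ρ ^ 2))
          * (ζ y * (phi (ζ y) / Phi (ζ y)) + phi (ζ y) ^ 2 / Phi (ζ y) ^ 2) + 1)
        * ((1 / (σ * Phi μ₂)) * phi (z y) * Phi (ζ y)))
      = ∫ y : ℝ, (z y - (ρ / Real.sqrt (1 - ρ ^ 2)) * (phi (ζ y) / Phi (ζ y))) ^ 2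
          * ((1 / (σ * Phi μ₂)) * phi (z y) * Phi (ζ y)) := by
  set a := ρ / √(1 - ρ ^ 2)
  set c := 1 / (σ * Phi μ₂)
  set ζ₀ : ℝ → ℝ := fun t => (μ₂ + ρ * t) / √(1 - ρ ^ 2)
  have hζ₀ (t : ℝ) : HasDerivAt ζ₀ a t := by
    simpa using (((hasDerivAt_id t).const_mul ρ).const_add μ₂).div_const √(1 - ρ ^ 2)
  have ha : ρ ^ 2 / (1 - ρ ^ 2) = a ^ 2 := by
    rw [div_pow, sq_sqrt (by nlinarith)]
  have hsubst (F : ℝ → ℝ) : ∫ y, c * F (z y) = c * (σ * ∫ t, F t) := by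
    simp only [hz, integral_const_mul, integral_comp_sub_div, abs_of_pos hσ, smul_eq_mul]
  set FL : ℝ → ℝ := fun t => (a ^ 2 * (ζ₀ t * invMillsRatio (ζ₀ t) + invMillsRatio (ζ₀ t) ^ 2)
    + 1) * (phi t * Phi (ζ₀ t))
  set FR : ℝ → ℝ := fun t => (t - a * invMillsRatio (ζ₀ t)) ^ 2 * (phi t * Phi (ζ₀ t))
  calc _ = ∫ y, c * FL (z y) := by
        congr 1; funext y
        simp only [FL, hζ, ha, invMillsRatio, div_pow]
        ring
    _ = ∫ y, c * FR (z y) := by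
        rw [hsubst, hsubst, integral_info_eq_integral_score_sq hζ₀]
    _ = _ := by
        congr 1; funext y
        simp only [FR, hζ, invMillsRatio]
        ring
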